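/- If two plane real polynomials f and g (viewed in (ℝ[x])[y], with g of positive degree in y) have nonzero resultant r(x) = res_y(f,g), and S ⊆ ℝ is a connected set on which r has no zeros, and β : S → ℝ is a continuous function with f(x, β(x)) = 0 for all x ∈ S (a section of f), then g is sign-invariant on the section: the sign of g(x, β(x)) is constant on S (in fact g(x, β(x)) ≠ 0 for all x ∈ S, and by continuity and connectedness its sign is constant). -/

import Mathlib

/-!
If `g(x, β(x))` vanished at some `x ∈ S`, then `α = β(x)` would be a common root of `f(x, ·)`
and `g(x, ·)`, and `(α ^ (N - 1), …, α, 1)`, with `N = deg f + deg g`, would be a nonzero kernel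
vector of the Sylvester matrix evaluated at `x`, forcing `r(x) = 0`. So `x ↦ g(x, β(x))` is a
continuous function without zeros on the connected set `S`, and the intermediate value theorem
fixes its sign.
-/

open Polynomial

/-- The Sylvester matrix of two univariate polynomials over a commutative ring. -/
noncomputable def sylvesterMatrix {R : Type*} [CommRing R] (f g : Polynomial R) :
    Matrix (Fin (g.natDegree + f.natDegree)) (Fin (g.natDegree + f.natDegree)) R :=
  Matrix.of fun i j =>
    if (i : ℕ) < g.natDegree then
      if (i : ℕ) ≤ (j : ℕ) ∧ (j : ℕ) ≤ (i : ℕ) + f.natDegree then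
        f.coeff (f.natDegree + (i : ℕ) - (j : ℕ))
      else 0
    else
      if (i : ℕ) - g.natDegree ≤ (j : ℕ) ∧ (j : ℕ) ≤ ((i : ℕ) - g.natDegree) + g.natDegree then
        g.coeff (g.natDegree + ((i : ℕ) - g.natDegree) - (j : ℕ))
      else 0

/-- The resultant of two univariate polynomials, as the determinant of their Sylvester matrix. -/
noncomputable def resultant {R : Type*} [CommRing R] (f g : Polynomial R) : R :=
  (sylvesterMatrix f g).det

namespace Polynomial

section Sylvester

variable {R K : Type*} [CommRing R]

def sylvesterRow (p : R[X]) (i₀ j : ℕ) : R :=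
  if i₀ ≤ j ∧ j ≤ i₀ + p.natDegree then p.coeff (p.natDegree + i₀ - j) else 0

theorem sylvesterMatrix_apply (f g : R[X]) (i j : Fin (g.natDegree + f.natDegree)) :
    sylvesterMatrix f g i j =
      if (i : ℕ) < g.natDegree then sylvesterRow f i j
      else sylvesterRow g (i - g.natDegree) j :=
  rfl

theorem sylvesterRow_eq_coeff_X_pow_mul (p : R[X]) {N i₀ j : ℕ} (hi₀ : i₀ + p.natDegree < N)
    (hj : j < N) :
    sylvesterRow p i₀ j = (X ^ (N - 1 - i₀ - p.natDegree) * p).coeff (N - 1 - j) := by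
  rw [sylvesterRow, coeff_X_pow_mul']
  split_ifs with h₁ h₂ h₂
  · congr 1
    omega
  · omega
  · exact (coeff_eq_zero_of_natDegree_lt (by omega)).symm
  · rfl

variable [CommRing K] (φ : R →+* K)

theorem sum_sylvesterRow_mul_pow_eq_zero {p : R[X]} {α : K} (hp : p.eval₂ φ α = 0) {N i₀ : ℕ}
    (hi₀ : i₀ + p.natDegree < N) :
    ∑ j : Fin N, φ (sylvesterRow p i₀ j) * α ^ (N - 1 - (j : ℕ)) = 0 := by
  have hq : (X ^ (N - 1 - i₀ - p.natDegree) * p).natDegree < N := by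
    have := natDegree_X_pow_le (R := R) (N - 1 - i₀ - p.natDegree)
    have := natDegree_mul_le (p := X ^ (N - 1 - i₀ - p.natDegree)) (q := p)
    omega
  set q := X ^ (N - 1 - i₀ - p.natDegree) * p
  calc ∑ j : Fin N, φ (sylvesterRow p i₀ j) * α ^ (N - 1 - (j : ℕ))
      = ∑ j ∈ Finset.range N, φ (q.coeff (N - 1 - j)) * α ^ (N - 1 - j) := by
        rw [← Fin.sum_univ_eq_sum_range]
        exact Finset.sum_congr rfl fun j _ => by
          rw [sylvesterRow_eq_coeff_X_pow_mul p hi₀ j.isLt]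
    _ = q.eval₂ φ α := by
        rw [Finset.sum_range_reflect (fun k => φ (q.coeff k) * α ^ k), eval₂_eq_sum_range' φ hq]
    _ = 0 := by rw [eval₂_mul, hp, mul_zero]

variable [IsDomain K]

theorem map_resultant_eq_zero_of_eval₂_eq_zero {f g : R[X]} (hfg : 0 < g.natDegree + f.natDegree)
    {α : K} (hf : f.eval₂ φ α = 0) (hg : g.eval₂ φ α = 0) : φ (_root_.resultant f g) = 0 := by
  set N := g.natDegree + f.natDegree
  rw [_root_.resultant, RingHom.map_det, ← Matrix.exists_mulVec_eq_zero_iff]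
  refine ⟨fun j => α ^ (N - 1 - (j : ℕ)), fun h => ?_, ?_⟩
  · simpa using congr_fun h ⟨N - 1, by omega⟩
  · funext i
    simp only [Matrix.mulVec, dotProduct, RingHom.mapMatrix_apply, Matrix.map_apply,
      sylvesterMatrix_apply, apply_ite φ, Pi.zero_apply]
    split_ifs with hi
    · exact sum_sylvesterRow_mul_pow_eq_zero φ hf (by omega)
    · exact sum_sylvesterRow_mul_pow_eq_zero φ hg (by omega)

end Sylvester

theorem Monic.natDegree_pos_of_eval₂_eq_zero {R S : Type*} [Semiring R] [Semiring S]
    [Nontrivial S] {p : R[X]} (hp : p.Monic) (φ : R →+* S) {α : S} (hα : p.eval₂ φ α = 0) :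
    0 < p.natDegree := by
  refine Nat.pos_of_ne_zero fun h => ?_
  simp [eq_one_of_monic_natDegree_zero hp h] at hα

theorem continuousOn_eval_map_evalRingHom {R : Type*} [CommSemiring R]
    [TopologicalSpace R] [IsTopologicalSemiring R] (p : R[X][X]) {β : R → R} {S : Set R}
    (hβ : ContinuousOn β S) :
    ContinuousOn (fun x => (p.map (evalRingHom x)).eval (β x)) S := by
  simp only [eval_map, eval₂_eq_sum, Polynomial.sum, coe_evalRingHom]
  exact continuousOn_finsetSum _ fun k _ => (p.coeff k).continuous.continuousOn.mul (hβ.pow k)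

end Polynomial

theorem IsPreconnected.forall_pos_or_forall_neg {X α : Type*} [TopologicalSpace X]
    [TopologicalSpace α] [LinearOrder α] [OrderClosedTopology α] [Zero α] {s : Set X}
    (hs : IsPreconnected s) {f : X → α} (hf : ContinuousOn f s) (h₀ : ∀ x ∈ s, f x ≠ 0) :
    (∀ x ∈ s, 0 < f x) ∨ (∀ x ∈ s, f x < 0) := by
  by_contra! h
  obtain ⟨⟨a, ha, hfa⟩, ⟨b, hb, hfb⟩⟩ := h
  obtain ⟨c, hc, hfc⟩ := hs.intermediate_value ha hb hf ⟨hfa, hfb⟩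
  exact h₀ c hc hfc

theorem sign_invariant_on_section_general (f g : Polynomial (Polynomial ℝ))
    (hf : f.Monic)
    (S : Set ℝ) (hS : IsConnected S)
    (hr : ∀ x ∈ S, (_root_.resultant f g).eval x ≠ 0)
    (β : ℝ → ℝ) (hβ : ContinuousOn β S)
    (hsec : ∀ x ∈ S, (f.map (Polynomial.evalRingHom x)).eval (β x) = 0) :
    (∀ x ∈ S, (g.map (Polynomial.evalRingHom x)).eval (β x) ≠ 0) ∧
    ((∀ x ∈ S, (g.map (Polynomial.evalRingHom x)).eval (β x) > 0) ∨
      (∀ x ∈ S, (g.map (Polynomial.evalRingHom x)).eval (β x) < 0)) := by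
  have hne : ∀ x ∈ S, (g.map (Polynomial.evalRingHom x)).eval (β x) ≠ 0 := by
    intro x hx hgx
    have hfx := hsec x hx
    rw [eval_map] at hfx hgx
    have hdeg := hf.natDegree_pos_of_eval₂_eq_zero _ hfx
    exact hr x hx (map_resultant_eq_zero_of_eval₂_eq_zero (evalRingHom x) (by omega) hfx hgx)
  exact ⟨hne, hS.isPreconnected.forall_pos_or_forall_neg
    (continuousOn_eval_map_evalRingHom g hβ) hne⟩

/-- if f, g ∈ (ℝ[x])[y] are monic in y with g of positive degree in y,
r = res_y(f,g) has no zeros on a connected set S ⊆ ℝ, and β is a continuous section of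
f over S (f(x, β(x)) = 0 on S), then g is sign-invariant on the section: the sign of
g(x, β(x)) is constant (and nonzero) on S. -/
theorem sign_invariant_on_section (f g : Polynomial (Polynomial ℝ))
    (hf : f.Monic) (hg : g.Monic) (hdeg : 0 < g.natDegree)
    (S : Set ℝ) (hS : IsConnected S)
    (hr : ∀ x ∈ S, (_root_.resultant f g).eval x ≠ 0)
    (β : ℝ → ℝ) (hβ : ContinuousOn β S)
    (hsec : ∀ x ∈ S, (f.map (Polynomial.evalRingHom x)).eval (β x) = 0) :
    (∀ x ∈ S, (g.map (Polynomial.evalRingHom x)).eval (β x) ≠ 0) ∧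
    ((∀ x ∈ S, (g.map (Polynomial.evalRingHom x)).eval (β x) > 0) ∨
      (∀ x ∈ S, (g.map (Polynomial.evalRingHom x)).eval (β x) < 0)) :=
  sign_invariant_on_section_general f g hf S hS hr β hβ hsec
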